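/- arXiv:2301.10923 — 5 statements merged into one kernel-verified Lean document; each statement's English description precedes it below -/
import Mathlib

section
/- Let F_1, ..., F_K : R^d → R be differentiable convex functions, H a symmetric positive definite matrix, and ψ_t ∈ R^d. Suppose there exists ψ̂ with F_k(ψ̂) + ζ < d_k for all k, where ζ > 0. Define c_k = min(√(2ε g_k^T H^{-1} g_k), F_k(ψ_t) - d_k + ζ) with g_k = ∇F_k(ψ_t) and ε > 0. Then the feasible set {g : g_k^T g + c_k ≤ 0 for all k} is nonempty and convex, and the quadratic program minimize (1/2) g^T H g subject to g_k^T g + c_k ≤ 0 for all k has a unique solution. -/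
/-!
By the first-order convexity inequality `⟪gₖ, ψ̂ - ψₜ⟫ ≤ Fₖ(ψ̂) - Fₖ(ψₜ)` and since
`cₖ ≤ Fₖ(ψₜ) - dₖ + ζ`, we get `⟪gₖ, ψ̂ - ψₜ⟫ + cₖ ≤ Fₖ(ψ̂) - dₖ + ζ < 0`: the point `ψ̂ - ψₜ` is
feasible. The feasible set is an intersection of closed half-spaces, and `x ↦ ⟪x, H x⟫` is strictly
convex and grows like `‖x‖²`, so it attains its minimum on that set at exactly one point.
-/

open RealInnerProductSpace Filter

section FirstOrderCondition

variable {E : Type*} [NormedAddCommGroup E] {f : E → ℝ} {s : Set E} {x y : E}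

theorem ConvexOn.fderiv_sub_le [NormedSpace ℝ E] {f' : E →L[ℝ] ℝ} (hf : ConvexOn ℝ s f)
    (hx : x ∈ s) (hy : y ∈ s) (hf' : HasFDerivAt f f' x) : f' (y - x) ≤ f y - f x := by
  set φ : ℝ → ℝ := f ∘ AffineMap.lineMap x y
  have hφ : ConvexOn ℝ (AffineMap.lineMap x y ⁻¹' s) φ := hf.comp_affineMap _
  have hφ' : HasDerivAt φ (f' (y - x)) 0 := by
    have hline : HasDerivAt (AffineMap.lineMap x y : ℝ → E) (y - x) 0 :=
      AffineMap.hasDerivAt_lineMap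
    rw [← AffineMap.lineMap_apply_zero (k := ℝ) x y] at hf'
    exact hf'.comp_hasDerivAt 0 hline
  simpa [φ, slope] using hφ.le_slope_of_hasDerivAt (by simpa using hx) (by simpa using hy)
    zero_lt_one hφ'

theorem ConvexOn.inner_gradient_sub_le [InnerProductSpace ℝ E] [CompleteSpace E]
    (hf : ConvexOn ℝ s f) (hx : x ∈ s) (hy : y ∈ s) (hfx : DifferentiableAt ℝ f x) :
    ⟪gradient f x, y - x⟫ ≤ f y - f x := by
  simpa [gradient, InnerProductSpace.toDual_symm_apply] using
    hf.fderiv_sub_le hx hy hfx.hasFDerivAt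

end FirstOrderCondition

section QuadraticForm

variable {E : Type*} [NormedAddCommGroup E] [InnerProductSpace ℝ E] {T : E →ₗ[ℝ] E}

theorem strictConvexOn_inner_self_apply (hT : ∀ x, x ≠ 0 → 0 < ⟪x, T x⟫) :
    StrictConvexOn ℝ Set.univ fun x => ⟪x, T x⟫ := by
  refine ⟨convex_univ, fun x _ y _ hxy a b ha hb hab => ?_⟩
  have hdefect : ⟪a • x + b • y, T (a • x + b • y)⟫ =
      a * ⟪x, T x⟫ + b * ⟪y, T y⟫ - a * b * ⟪x - y, T (x - y)⟫ := by
    obtain rfl : b = 1 - a := by linarith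
    simp only [map_add, map_smul, map_sub, inner_add_left, inner_add_right, inner_sub_left,
      inner_sub_right, real_inner_smul_left, real_inner_smul_right]
    ring
  change ⟪a • x + b • y, T (a • x + b • y)⟫ < a * ⟪x, T x⟫ + b * ⟪y, T y⟫
  rw [hdefect]
  have := mul_pos (mul_pos ha hb) (hT _ (sub_ne_zero.2 hxy))
  linarith

variable [FiniteDimensional ℝ E]

theorem exists_pos_mul_norm_sq_le_inner_self_apply (hT : ∀ x, x ≠ 0 → 0 < ⟪x, T x⟫) :
    ∃ m > 0, ∀ x, m * ‖x‖ ^ 2 ≤ ⟪x, T x⟫ := by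
  rcases subsingleton_or_nontrivial E with hE | hE
  · exact ⟨1, one_pos, fun x => by simp [Subsingleton.elim x 0]⟩
  have hQ : Continuous fun x : E => ⟪x, T x⟫ :=
    continuous_id.inner T.continuous_of_finiteDimensional
  obtain ⟨z, hz, hzmin⟩ := (isCompact_sphere (0 : E) 1).exists_isMinOn
    (NormedSpace.sphere_nonempty.2 zero_le_one) hQ.continuousOn
  have hz0 : z ≠ 0 := ne_zero_of_mem_unit_sphere ⟨z, hz⟩
  refine ⟨⟪z, T z⟫, hT z hz0, fun x => ?_⟩
  rcases eq_or_ne x 0 with rfl | hx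
  · simp
  have hxn : 0 < ‖x‖ := norm_pos_iff.2 hx
  have hmin : ⟪z, T z⟫ ≤ ⟪‖x‖⁻¹ • x, T (‖x‖⁻¹ • x)⟫ :=
    hzmin (by simp [norm_smul, hxn.ne'])
  rw [map_smul, real_inner_smul_left, real_inner_smul_right, ← mul_assoc, ← sq] at hmin
  calc ⟪z, T z⟫ * ‖x‖ ^ 2 ≤ ‖x‖⁻¹ ^ 2 * ⟪x, T x⟫ * ‖x‖ ^ 2 := by gcongr
    _ = ⟪x, T x⟫ := by field_simp

theorem tendsto_inner_self_apply_cocompact (hT : ∀ x, x ≠ 0 → 0 < ⟪x, T x⟫) :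
    Tendsto (fun x => ⟪x, T x⟫) (cocompact E) atTop := by
  obtain ⟨m, hm, hmT⟩ := exists_pos_mul_norm_sq_le_inner_self_apply hT
  exact tendsto_atTop_mono hmT <| (tendsto_pow_atTop two_ne_zero).comp
    tendsto_norm_cocompact_atTop |>.const_mul_atTop hm

end QuadraticForm

theorem StrictConvexOn.existsUnique_isMinOn_of_tendsto_cocompact {E : Type*}
    [TopologicalSpace E] [AddCommGroup E] [Module ℝ E] {f : E → ℝ} {s : Set E}
    (hf : StrictConvexOn ℝ s f) (hfc : ContinuousOn f s) (hs : IsClosed s) (hne : s.Nonempty)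
    (htends : Tendsto f (cocompact E) atTop) : ∃! x, x ∈ s ∧ IsMinOn f s x := by
  obtain ⟨x₀, hx₀⟩ := hne
  obtain ⟨x, hx, hmin⟩ := hfc.exists_isMinOn' hs hx₀
    ((htends.eventually_ge_atTop (f x₀)).filter_mono inf_le_left)
  exact ⟨x, ⟨hx, hmin⟩, fun y ⟨hy, hymin⟩ => hf.eq_of_isMinOn hymin hmin hy hx⟩

theorem Matrix.PosDef.inner_toEuclideanLin_self_pos {n : Type*} [Fintype n] [DecidableEq n]
    {H : Matrix n n ℝ} (hH : H.PosDef) {x : EuclideanSpace ℝ n} (hx : x ≠ 0) :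
    0 < ⟪x, Matrix.toEuclideanLin H x⟫ := by
  simpa [Matrix.toLpLin_apply, EuclideanSpace.inner_eq_star_dotProduct,
    dotProduct_comm] using hH.dotProduct_mulVec_pos (x := x.ofLp) (by simpa using hx)

section HalfSpaces

variable {ι E : Type*} [NormedAddCommGroup E] [InnerProductSpace ℝ E] (a : ι → E) (b : ι → ℝ)

theorem convex_setOf_forall_inner_add_nonpos : Convex ℝ {x | ∀ i, ⟪a i, x⟫ + b i ≤ 0} := by
  simp only [Set.ofPred_forall]
  exact convex_iInter fun i => by
    simpa only [le_neg_iff_add_nonpos_right, innerₛₗ_apply_apply] using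
      convex_halfSpace_le (innerₛₗ ℝ (a i)).isLinear (-b i)

theorem isClosed_setOf_forall_inner_add_nonpos : IsClosed {x | ∀ i, ⟪a i, x⟫ + b i ≤ 0} := by
  simp only [Set.ofPred_forall]
  exact isClosed_iInter fun i => isClosed_le (by fun_prop) continuous_const

end HalfSpaces

theorem stmt_1_general {n K : ℕ} (F : Fin K → EuclideanSpace ℝ (Fin n) → ℝ)
    (hdiff : ∀ k, Differentiable ℝ (F k))
    (hconv : ∀ k, ConvexOn ℝ Set.univ (F k))
    (H : Matrix (Fin n) (Fin n) ℝ) (hH : H.PosDef)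
    (ψt : EuclideanSpace ℝ (Fin n)) (dk : Fin K → ℝ) (ζ ε : ℝ)
    (hfeas : ∃ ψhat : EuclideanSpace ℝ (Fin n), ∀ k, F k ψhat + ζ < dk k) :
    let g : Fin K → EuclideanSpace ℝ (Fin n) := fun k => gradient (F k) ψt
    let c : Fin K → ℝ := fun k =>
      min (Real.sqrt (2 * ε * ⟪g k, Matrix.toEuclideanLin H⁻¹ (g k)⟫))
        (F k ψt - dk k + ζ)
    let feasSet : Set (EuclideanSpace ℝ (Fin n)) :=
      {x | ∀ k, ⟪g k, x⟫ + c k ≤ 0}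
    feasSet.Nonempty ∧ Convex ℝ feasSet ∧
      ∃! x : EuclideanSpace ℝ (Fin n), x ∈ feasSet ∧
        ∀ y ∈ feasSet,
          (1 / 2) * ⟪x, Matrix.toEuclideanLin H x⟫ ≤
            (1 / 2) * ⟪y, Matrix.toEuclideanLin H y⟫ := by
  intro g c feasSet
  obtain ⟨ψhat, hψhat⟩ := hfeas
  have hfeasible : ψhat - ψt ∈ feasSet := fun k => by
    have hgrad : ⟪g k, ψhat - ψt⟫ ≤ F k ψhat - F k ψt :=
      (hconv k).inner_gradient_sub_le (Set.mem_univ _) (Set.mem_univ _) (hdiff k ψt)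
    have hck : c k ≤ F k ψt - dk k + ζ := min_le_right _ _
    linarith [hψhat k]
  have hconvex : Convex ℝ feasSet := convex_setOf_forall_inner_add_nonpos g c
  refine ⟨⟨_, hfeasible⟩, hconvex, ?_⟩
  have hpos : ∀ x, x ≠ 0 → 0 < ⟪x, Matrix.toEuclideanLin H x⟫ :=
    fun _ => hH.inner_toEuclideanLin_self_pos
  have hmin := ((strictConvexOn_inner_self_apply hpos).subset (Set.subset_univ _) hconvex)
    |>.existsUnique_isMinOn_of_tendsto_cocompact
      (continuous_id.inner (Matrix.toEuclideanLin H).continuous_of_finiteDimensional).continuousOn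
      (isClosed_setOf_forall_inner_add_nonpos g c) ⟨_, hfeasible⟩
      (tendsto_inner_self_apply_cocompact hpos)
  simpa only [isMinOn_iff, mul_le_mul_iff_right₀ one_half_pos] using hmin

/-- Feasibility, convexity, and unique solvability of the gradient-integration QP:
with convex differentiable constraints `F k`, a strictly feasible point `ψ̂`,
symmetric positive definite `H`, and truncated thresholds
`c k = min (√(2ε gₖᵀH⁻¹gₖ)) (Fₖ(ψₜ) - dₖ + ζ)`, the constraint set
`{g | gₖᵀ g + cₖ ≤ 0 ∀k}` is nonempty and convex, and the QP
`minimize (1/2) gᵀ H g` over it has a unique solution. -/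
theorem stmt_1 {n K : ℕ} (F : Fin K → EuclideanSpace ℝ (Fin n) → ℝ)
    (hdiff : ∀ k, Differentiable ℝ (F k))
    (hconv : ∀ k, ConvexOn ℝ Set.univ (F k))
    (H : Matrix (Fin n) (Fin n) ℝ) (hH : H.PosDef)
    (ψt : EuclideanSpace ℝ (Fin n)) (dk : Fin K → ℝ) (ζ ε : ℝ)
    (hζ : 0 < ζ) (hε : 0 < ε)
    (hfeas : ∃ ψhat : EuclideanSpace ℝ (Fin n), ∀ k, F k ψhat + ζ < dk k) :
    let g : Fin K → EuclideanSpace ℝ (Fin n) := fun k => gradient (F k) ψt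
    let c : Fin K → ℝ := fun k =>
      min (Real.sqrt (2 * ε * ⟪g k, Matrix.toEuclideanLin H⁻¹ (g k)⟫))
        (F k ψt - dk k + ζ)
    let feasSet : Set (EuclideanSpace ℝ (Fin n)) :=
      {x | ∀ k, ⟪g k, x⟫ + c k ≤ 0}
    feasSet.Nonempty ∧ Convex ℝ feasSet ∧
      ∃! x : EuclideanSpace ℝ (Fin n), x ∈ feasSet ∧
        ∀ y ∈ feasSet,
          (1 / 2) * ⟪x, Matrix.toEuclideanLin H x⟫ ≤
            (1 / 2) * ⟪y, Matrix.toEuclideanLin H y⟫ :=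
  stmt_1_general F hdiff hconv H hH ψt dk ζ ε hfeas
end

section
/- Let F : R^d → R have L-Lipschitz gradient, H = B B^T with eigenvalues of H at least R > 0. Suppose the update direction g satisfies ∇F(ψ_t)^T g + √(2ε)‖B^{-1}∇F(ψ_t)‖ ≤ 0, let b = B^T g, and suppose ‖B^{-1}∇F(ψ_t)‖ ≥ m > 0. If the step size is β = (2√(2ε) m R)/(L ‖b‖²) · β' with 0 < β' < 1, then F(ψ_t + β g) - F(ψ_t) ≤ β √(2ε) m (β' - 1) < 0, i.e., the constraint value strictly decreases. -/
/-!
By the descent lemma for an `L`-smooth function,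
`F(ψ + βg) - F(ψ) ≤ β⟪∇F(ψ), g⟫ + (L/2) β² ‖g‖²`. The constraint gives
`⟪∇F(ψ), g⟫ ≤ -√(2ε) m`, and `‖g‖² ≤ ‖Bᵀg‖² / R = ‖b‖² / R` because `‖Bᵀg‖² = ⟪g, Hg⟫`;
the step size is chosen exactly so that the quadratic term is then at most `β √(2ε) m β'`.
-/

open RealInnerProductSpace

section Descent

variable {E : Type*} [NormedAddCommGroup E] [InnerProductSpace ℝ E] [CompleteSpace E]
  {f : E → ℝ}

theorem Differentiable.hasDerivAt_comp_add_smul (hf : Differentiable ℝ f) (x v : E) (t : ℝ) :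
    HasDerivAt (fun t : ℝ => f (x + t • v)) ⟪gradient f (x + t • v), v⟫ t := by
  have hline : HasDerivAt (fun t : ℝ => x + t • v) v t := by
    simpa using ((hasDerivAt_id t).smul_const v).const_add x
  exact (hf _).hasGradientAt.hasFDerivAt.comp_hasDerivAt t hline

theorem LipschitzWith.inner_gradient_add_smul_sub_le {K : NNReal}
    (hK : LipschitzWith K (gradient f)) (x v : E) {t : ℝ} (ht : 0 ≤ t) :
    ⟪gradient f (x + t • v) - gradient f x, v⟫ ≤ K * t * ‖v‖ ^ 2 :=
  calc ⟪gradient f (x + t • v) - gradient f x, v⟫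
      ≤ ‖gradient f (x + t • v) - gradient f x‖ * ‖v‖ := real_inner_le_norm _ _
    _ ≤ K * ‖t • v‖ * ‖v‖ := by
        gcongr
        simpa [dist_eq_norm] using hK.dist_le_mul (x + t • v) x
    _ = K * t * ‖v‖ ^ 2 := by rw [norm_smul, Real.norm_of_nonneg ht]; ring

theorem Differentiable.sub_le_inner_gradient_add {K : NNReal} (hf : Differentiable ℝ f)
    (hK : LipschitzWith K (gradient f)) (x v : E) :
    f (x + v) - f x ≤ ⟪gradient f x, v⟫ + K / 2 * ‖v‖ ^ 2 := by
  -- `φ` is antitone on `[0, 1]`: its derivative is `⟪∇f(x + t v) - ∇f x, v⟫ - K t ‖v‖² ≤ 0`.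
  set φ : ℝ → ℝ := fun t => f (x + t • v) - t * ⟪gradient f x, v⟫ - K / 2 * t ^ 2 * ‖v‖ ^ 2
  have hφ : ∀ t, HasDerivAt φ
      (⟪gradient f (x + t • v), v⟫ - ⟪gradient f x, v⟫ - K * t * ‖v‖ ^ 2) t := by
    intro t
    refine (((hf.hasDerivAt_comp_add_smul x v t).fun_sub
      ((hasDerivAt_id' t).mul_const ⟪gradient f x, v⟫)).fun_sub
      (((hasDerivAt_pow 2 t).const_mul (K / 2 : ℝ)).mul_const (‖v‖ ^ 2))).congr_deriv ?_
    push_cast; ring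
  have hanti : AntitoneOn φ (Set.Icc 0 1) := by
    refine antitoneOn_of_hasDerivWithinAt_nonpos (convex_Icc 0 1)
      (fun t _ => (hφ t).continuousAt.continuousWithinAt) (fun t _ => (hφ t).hasDerivWithinAt)
      fun t ht => ?_
    rw [interior_Icc] at ht
    have := hK.inner_gradient_add_smul_sub_le x v ht.1.le
    rw [inner_sub_left] at this
    linarith
  have := hanti (by norm_num : (0 : ℝ) ∈ Set.Icc 0 1) (by norm_num : (1 : ℝ) ∈ Set.Icc 0 1)
    zero_le_one
  simp only [φ, zero_smul, add_zero, one_smul] at this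
  linarith

end Descent

theorem Matrix.norm_toEuclideanLin_transpose_sq {m n : Type*} [Fintype m] [Fintype n]
    [DecidableEq m] [DecidableEq n] (B : Matrix m n ℝ) (g : EuclideanSpace ℝ m) :
    ‖toEuclideanLin B.transpose g‖ ^ 2 = ⟪g, toEuclideanLin (B * B.transpose) g⟫ := by
  calc ‖toEuclideanLin B.transpose g‖ ^ 2
      = ⟪LinearMap.adjoint (toEuclideanLin B) g, toEuclideanLin B.transpose g⟫ := by
        rw [← toEuclideanLin_conjTranspose_eq_adjoint, conjTranspose_eq_transpose_of_trivial,
          real_inner_self_eq_norm_sq]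
    _ = ⟪g, toEuclideanLin B (toEuclideanLin B.transpose g)⟫ := LinearMap.adjoint_inner_left _ _ _
    _ = ⟪g, toEuclideanLin (B * B.transpose) g⟫ := by simp [toLpLin_apply, mulVec_mulVec]

theorem quadratic_term_le_of_stepSize {L R q p c β β' : ℝ} (hL : 0 < L) (hR : 0 < R)
    (hq : 0 < q) (hpq : R * p ≤ q) (hβ : β = 2 * c * R / (L * q) * β') :
    L / 2 * (β ^ 2 * p) ≤ β * (c * β') := by
  have hβq : L * β * q = 2 * c * R * β' := by
    rw [hβ]; field_simp
  have hRp : R * (L / 2 * (β ^ 2 * p)) ≤ R * (β * (c * β')) :=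
    calc R * (L / 2 * (β ^ 2 * p)) = L / 2 * β ^ 2 * (R * p) := by ring
      _ ≤ L / 2 * β ^ 2 * q := by gcongr
      _ = R * (β * (c * β')) := by linear_combination β / 2 * hβq
  exact le_of_mul_le_mul_left hRp hR

theorem stmt_3_general {n : ℕ} (F : EuclideanSpace ℝ (Fin n) → ℝ)
    (hdiff : Differentiable ℝ F) (L : ℝ) (hL : 0 < L)
    (hLip : LipschitzWith (Real.toNNReal L) (gradient F))
    (B H : Matrix (Fin n) (Fin n) ℝ) (hHB : H = B * B.transpose)
    (R : ℝ) (hR : 0 < R)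
    (heig : ∀ x : EuclideanSpace ℝ (Fin n), R * ‖x‖ ^ 2 ≤ ⟪x, Matrix.toEuclideanLin H x⟫)
    (ε : ℝ) (hε : 0 < ε) (ψt g b : EuclideanSpace ℝ (Fin n))
    (hb : b = Matrix.toEuclideanLin B.transpose g)
    (hconstr : ⟪gradient F ψt, g⟫ +
      Real.sqrt (2 * ε) * ‖Matrix.toEuclideanLin B⁻¹ (gradient F ψt)‖ ≤ 0)
    (m : ℝ) (hm : 0 < m) (hmle : m ≤ ‖Matrix.toEuclideanLin B⁻¹ (gradient F ψt)‖)
    (β β' : ℝ) (hβ'pos : 0 < β') (hβ'lt : β' < 1)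
    (hβ : β = (2 * Real.sqrt (2 * ε) * m * R) / (L * ‖b‖ ^ 2) * β') :
    F (ψt + β • g) - F ψt ≤ β * Real.sqrt (2 * ε) * m * (β' - 1) ∧
      β * Real.sqrt (2 * ε) * m * (β' - 1) < 0 := by
  set s := Real.sqrt (2 * ε)
  have hs : 0 < s := Real.sqrt_pos.2 (by positivity)
  have hslope : ⟪gradient F ψt, g⟫ ≤ -(s * m) := by
    linarith [mul_le_mul_of_nonneg_left hmle hs.le]
  have hg : g ≠ 0 := by
    rintro rfl
    rw [inner_zero_right] at hslope
    linarith [mul_pos hs hm]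
  have hRb : R * ‖g‖ ^ 2 ≤ ‖b‖ ^ 2 := by
    rw [hb, Matrix.norm_toEuclideanLin_transpose_sq, ← hHB]
    exact heig g
  have hb0 : 0 < ‖b‖ ^ 2 := lt_of_lt_of_le (by positivity) hRb
  have hβ0 : 0 < β := by rw [hβ]; positivity
  have hdesc := hdiff.sub_le_inner_gradient_add hLip ψt (β • g)
  rw [Real.coe_toNNReal L hL.le, real_inner_smul_right, norm_smul, Real.norm_of_nonneg hβ0.le,
    mul_pow] at hdesc
  have hquad := quadratic_term_le_of_stepSize (c := s * m) (β' := β') hL hR hb0 hRb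
    (hβ.trans (by ring))
  constructor
  · linarith [mul_le_mul_of_nonneg_left hslope hβ0.le]
  · exact mul_neg_of_pos_of_neg (by positivity) (by linarith)

/-- Strict decrease of a violated constraint in the out-boundary case: with
`∇F(ψₜ)ᵀ g + √(2ε)‖B⁻¹∇F(ψₜ)‖ ≤ 0`, `b = Bᵀ g`, `‖B⁻¹∇F(ψₜ)‖ ≥ m > 0`, and step size
`β = (2√(2ε) m R)/(L‖b‖²)·β'` with `0 < β' < 1`, the constraint value strictly decreases:
`F(ψₜ + βg) - F(ψₜ) ≤ β√(2ε) m (β' - 1) < 0`. -/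
theorem stmt_3 {n : ℕ} (F : EuclideanSpace ℝ (Fin n) → ℝ)
    (hdiff : Differentiable ℝ F) (L : ℝ) (hL : 0 < L)
    (hLip : LipschitzWith (Real.toNNReal L) (gradient F))
    (B H : Matrix (Fin n) (Fin n) ℝ) (hHB : H = B * B.transpose) (hH : H.PosDef)
    (R : ℝ) (hR : 0 < R)
    (heig : ∀ x : EuclideanSpace ℝ (Fin n), R * ‖x‖ ^ 2 ≤ ⟪x, Matrix.toEuclideanLin H x⟫)
    (ε : ℝ) (hε : 0 < ε) (ψt g b : EuclideanSpace ℝ (Fin n))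
    (hb : b = Matrix.toEuclideanLin B.transpose g)
    (hconstr : ⟪gradient F ψt, g⟫ +
      Real.sqrt (2 * ε) * ‖Matrix.toEuclideanLin B⁻¹ (gradient F ψt)‖ ≤ 0)
    (m : ℝ) (hm : 0 < m) (hmle : m ≤ ‖Matrix.toEuclideanLin B⁻¹ (gradient F ψt)‖)
    (β β' : ℝ) (hβ'pos : 0 < β') (hβ'lt : β' < 1)
    (hβ : β = (2 * Real.sqrt (2 * ε) * m * R) / (L * ‖b‖ ^ 2) * β') :
    F (ψt + β • g) - F ψt ≤ β * Real.sqrt (2 * ε) * m * (β' - 1) ∧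
      β * Real.sqrt (2 * ε) * m * (β' - 1) < 0 :=
  stmt_3_general F hdiff L hL hLip B H hHB R hR heig ε hε ψt g b hb hconstr m hm hmle β β' hβ'pos
    hβ'lt hβ
end

section
/- In a finite MDP, the return distribution ν_R^π of policy π, which satisfies the distributional Bellman equation ν_R^π(s,a) = E_π[(f_{γ,r})_# ν_R^π(s',a')], is a fixed point of the distributional TD(λ) operator T_λ^{μ,π} for any behavioral policy μ and λ ∈ [0,1): T_λ^{μ,π} ν_R^π = ν_R^π. Combined with the γ^{1/p}-contraction property, the iteration ν_{k+1} = T_λ^{μ,π} ν_k converges to ν_R^π from any initial ν_0. -/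
open MeasureTheory ProbabilityTheory Filter

/-- The `l_p` distance between two distributions on `ℝ`, defined via their CDFs. -/
noncomputable def lpDist (p : ℝ) (η₁ η₂ : Measure ℝ) : ℝ :=
  (∫ x, |cdf η₁ x - cdf η₂ x| ^ p) ^ (1 / p)

/-- The supremum distance `l̄_p(ν₁, ν₂) = sup_{(s,a)} l_p(ν₁(s,a), ν₂(s,a))`. -/
noncomputable def supDist {S A : Type*} (p : ℝ) (ν₁ ν₂ : S × A → Measure ℝ) : ℝ :=
  ⨆ sa : S × A, lpDist p (ν₁ sa) (ν₂ sa)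

/-- The one-step distributional Bellman operator for target policy `π`:
`(T₁ ν)(s,a) = Σ_{s',a'} P(s'|s,a) π(a'|s') (f_{γ, R(s,a,s')})_# ν(s',a')`. -/
noncomputable def oneStepOp {S A : Type*} [Fintype S] [Fintype A]
    (P : S → A → S → ℝ) (π : S → A → ℝ) (Rw : S → A → S → ℝ) (γ : ℝ)
    (ν : S × A → Measure ℝ) : S × A → Measure ℝ := fun sa =>
  ∑ s' : S, ∑ a' : A,
    ENNReal.ofReal (P sa.1 sa.2 s' * π s' a') •
      (ν (s', a')).map fun x => γ * x + Rw sa.1 sa.2 s'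

/-- The distributional TD(λ) operator `T_λ^{μ,π}`, the normalized `λ`-weighted mixture
over `i ≥ 0` of the `(i+1)`-step pushforward distributions:
`(T_λ ν)(s,a) = (1-λ) Σ_{i≥0} λ^i (T₁^{i+1} ν)(s,a)`. -/
noncomputable def tdLambdaOp {S A : Type*} [Fintype S] [Fintype A]
    (P : S → A → S → ℝ) (π : S → A → ℝ) (Rw : S → A → S → ℝ) (γ lam : ℝ)
    (ν : S × A → Measure ℝ) : S × A → Measure ℝ := fun sa =>
  Measure.sum fun i : ℕ =>
    ENNReal.ofReal ((1 - lam) * lam ^ i) • (oneStepOp P π Rw γ)^[i + 1] ν sa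

/-!
Let `d(μ, η) = ‖F_μ - F_η‖_{L^p}` be the `L^p` distance between CDFs, so that `l_p = d`
whenever `d < ∞`. The pushforward by `x ↦ γ x + r` scales `d` by `γ^{1/p}`, and by Minkowski's
inequality `d` of two mixtures with common weights is at most the weighted sum of the `d`'s of
their components. `T₁` mixes affine pushforwards, so it contracts `l̄_p` by `γ^{1/p}`, and `T_λ`
mixes the iterates `T₁^{i+1}`, so it contracts by `γ^{1/p}` as well; it fixes `ν_R` because
every `T₁^{i+1}` does.

The Bochner integral in `lpDist` makes `l_p = 0` when `d = ∞`. This is harmless: rewards are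
bounded, so `ν_R` has bounded support, and a mixture is at finite distance from a boundedly
supported law only if each component of positive weight is, since heavy tails survive mixing.
-/

open Set
open scoped ENNReal

noncomputable def cdfDist (p : ℝ≥0∞) (μ η : Measure ℝ) : ℝ≥0∞ :=
  eLpNorm (fun x => cdf μ x - cdf η x) p volume

lemma aestronglyMeasurable_cdf_sub_cdf (μ η : Measure ℝ) :
    AEStronglyMeasurable (fun x => cdf μ x - cdf η x) volume :=
  ((monotone_cdf μ).measurable.sub (monotone_cdf η).measurable).aestronglyMeasurable

lemma lpDist_eq_toReal_cdfDist {p : ℝ} (hp : 0 < p) (μ η : Measure ℝ) :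
    lpDist p μ η = (cdfDist (ENNReal.ofReal p) μ η).toReal := by
  have hp0 : ENNReal.ofReal p ≠ 0 := by simpa using hp
  have hmeas := aestronglyMeasurable_cdf_sub_cdf μ η
  by_cases h : MemLp (fun x => cdf μ x - cdf η x) (ENNReal.ofReal p) volume
  · rw [cdfDist, h.eLpNorm_eq_integral_rpow_norm hp0 ENNReal.ofReal_ne_top,
      ENNReal.toReal_ofReal (by positivity), ENNReal.toReal_ofReal hp.le, lpDist, one_div]
    rfl
  · have hint : ¬ Integrable (fun x => ‖cdf μ x - cdf η x‖ ^ (ENNReal.ofReal p).toReal) :=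
      (integrable_norm_rpow_iff hmeas hp0 ENNReal.ofReal_ne_top).not.mpr h
    simp only [ENNReal.toReal_ofReal hp.le, Real.norm_eq_abs] at hint
    have htop : cdfDist (ENNReal.ofReal p) μ η = ∞ := not_lt_top_iff.mp (not_and.mp h hmeas)
    rw [htop, lpDist, integral_undef hint, Real.zero_rpow (by positivity), ENNReal.toReal_top]

lemma lpDist_nonneg (p : ℝ) (μ η : Measure ℝ) : 0 ≤ lpDist p μ η :=
  Real.rpow_nonneg (integral_nonneg fun _ => Real.rpow_nonneg (abs_nonneg _) _) _

section BoundedSupport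

variable {η : Measure ℝ} [IsProbabilityMeasure η] {C x : ℝ}

lemma cdf_eq_zero_of_lt_neg (hη : ∀ᵐ y ∂η, |y| ≤ C) (hx : x < -C) : cdf η x = 0 := by
  rw [cdf_eq_real, measureReal_eq_zero_iff]
  refine measure_mono_null (fun y (hy : y ≤ x) => ?_) (ae_iff.mp hη)
  exact not_le.mpr (lt_abs.mpr (Or.inr (by linarith)))

lemma measureReal_Ioi_eq_one_sub_cdf (x : ℝ) : η.real (Ioi x) = 1 - cdf η x := by
  rw [cdf_eq_real, ← compl_Iic, probReal_compl_eq_one_sub measurableSet_Iic]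

lemma cdf_eq_one_of_lt (hη : ∀ᵐ y ∂η, |y| ≤ C) (hx : C < x) : cdf η x = 1 := by
  have hIoi : η.real (Ioi x) = 0 := by
    rw [measureReal_eq_zero_iff]
    refine measure_mono_null (fun y (hy : x < y) => ?_) (ae_iff.mp hη)
    exact not_le.mpr (lt_abs.mpr (Or.inl (by linarith)))
  linarith [measureReal_Ioi_eq_one_sub_cdf (η := η) x]

end BoundedSupport

lemma toReal_mul_measureReal_le {μ ρ : Measure ℝ} [IsFiniteMeasure μ] {c : ℝ≥0∞}
    (hρμ : c • ρ ≤ μ) (s : Set ℝ) : c.toReal * ρ.real s ≤ μ.real s := by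
  rw [measureReal_def, measureReal_def, ← ENNReal.toReal_mul]
  exact ENNReal.toReal_mono (measure_ne_top μ s) (hρμ s)

-- Outside `[-C, C]` the CDFs of `η` and `η'` are both `0` or both `1`, so there both sides
-- compare a tail of `ρ` with the same tail of `μ`.
lemma abs_cdf_sub_cdf_le_of_smul_le {μ ρ η η' : Measure ℝ} [IsProbabilityMeasure μ]
    [IsProbabilityMeasure ρ] [IsProbabilityMeasure η] [IsProbabilityMeasure η'] {c : ℝ≥0∞}
    (hc : 0 < c.toReal) (hρμ : c • ρ ≤ μ) {C : ℝ}
    (hη : ∀ᵐ x ∂η, |x| ≤ C) (hη' : ∀ᵐ x ∂η', |x| ≤ C) (x : ℝ) :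
    |cdf ρ x - cdf η' x| ≤ c.toReal⁻¹ * |cdf μ x - cdf η x| + (Icc (-C) C).indicator 1 x := by
  have hind : 0 ≤ (Icc (-C) C).indicator (1 : ℝ → ℝ) x := indicator_nonneg (by simp) x
  rcases lt_or_ge x (-C) with hx | hx
  · have key : c.toReal * cdf ρ x ≤ cdf μ x := by
      simpa only [cdf_eq_real] using toReal_mul_measureReal_le hρμ (Iic x)
    rw [cdf_eq_zero_of_lt_neg hη hx, cdf_eq_zero_of_lt_neg hη' hx, sub_zero, sub_zero,
      abs_of_nonneg (cdf_nonneg ρ x), abs_of_nonneg (cdf_nonneg μ x)]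
    linarith [(le_inv_mul_iff₀ hc).mpr key]
  rcases lt_or_ge C x with hx' | hx'
  · have key : c.toReal * (1 - cdf ρ x) ≤ 1 - cdf μ x := by
      simpa only [measureReal_Ioi_eq_one_sub_cdf] using toReal_mul_measureReal_le hρμ (Ioi x)
    rw [cdf_eq_one_of_lt hη hx', cdf_eq_one_of_lt hη' hx', abs_sub_comm, abs_sub_comm _ 1,
      abs_of_nonneg (sub_nonneg.mpr (cdf_le_one ρ x)),
      abs_of_nonneg (sub_nonneg.mpr (cdf_le_one μ x))]
    linarith [(le_inv_mul_iff₀ hc).mpr key]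
  · rw [indicator_of_mem (mem_Icc.mpr ⟨hx, hx'⟩), Pi.one_apply]
    have : |cdf ρ x - cdf η' x| ≤ 1 := abs_sub_le_iff.mpr
      ⟨by linarith [cdf_le_one ρ x, cdf_nonneg η' x], by linarith [cdf_le_one η' x, cdf_nonneg ρ x]⟩
    nlinarith [abs_nonneg (cdf μ x - cdf η x), inv_pos.mpr hc]

lemma memLp_cdf_sub_cdf_of_smul_le {p : ℝ≥0∞} {μ ρ η η' : Measure ℝ} [IsProbabilityMeasure μ]
    [IsProbabilityMeasure ρ] [IsProbabilityMeasure η] [IsProbabilityMeasure η'] {c : ℝ≥0∞}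
    (hc0 : c ≠ 0) (hc : c ≠ ∞) (hρμ : c • ρ ≤ μ) {C : ℝ}
    (hη : ∀ᵐ x ∂η, |x| ≤ C) (hη' : ∀ᵐ x ∂η', |x| ≤ C)
    (h : MemLp (fun x => cdf μ x - cdf η x) p volume) :
    MemLp (fun x => cdf ρ x - cdf η' x) p volume := by
  have hc' : 0 < c.toReal := ENNReal.toReal_pos hc0 hc
  have hbound : MemLp (fun x => c.toReal⁻¹ * ‖cdf μ x - cdf η x‖ + (Icc (-C) C).indicator 1 x)
      p volume :=
    (h.norm.const_mul _).add
      (memLp_indicator_const p measurableSet_Icc 1 (Or.inr measure_Icc_lt_top.ne))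
  refine hbound.of_le (aestronglyMeasurable_cdf_sub_cdf ρ η') (ae_of_all _ fun x => ?_)
  simp only [Real.norm_eq_abs]
  exact (abs_cdf_sub_cdf_le_of_smul_le hc' hρμ hη hη' x).trans (le_abs_self _)

theorem eLpNorm_tsum_le {α E ι : Type*} [MeasurableSpace α] {μ : Measure α}
    [NormedAddCommGroup E] [Countable ι] {p : ℝ≥0∞} (hp : 1 ≤ p) {f : ι → α → E}
    (hf : ∀ i, AEStronglyMeasurable (f i) μ) (hsum : ∀ x, Summable fun i => f i x) :
    eLpNorm (fun x => ∑' i, f i x) p μ ≤ ∑' i, eLpNorm (f i) p μ :=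
  Lp.eLpNorm_le_of_ae_tendsto (u := atTop) (f := fun s : Finset ι => ∑ i ∈ s, f i)
    (Eventually.of_forall fun s =>
      (eLpNorm_sum_le (fun i _ => hf i) hp).trans (ENNReal.sum_le_tsum s))
    (fun s => Finset.aestronglyMeasurable_sum s fun i _ => hf i)
    (ae_of_all _ fun x => by simp only [Finset.sum_apply]; exact (hsum x).hasSum)

section Mixture

variable {ι : Type*} {c : ι → ℝ≥0∞} (hc : ∑' i, c i = 1)
include hc

lemma isProbabilityMeasure_sum_smul {α : Type*} [MeasurableSpace α]
    (μ : ι → Measure α) [∀ i, IsProbabilityMeasure (μ i)] :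
    IsProbabilityMeasure (Measure.sum fun i => c i • μ i) :=
  ⟨by simp [Measure.sum_apply _ MeasurableSet.univ, hc]⟩

lemma cdf_sum_smul (μ : ι → Measure ℝ) [∀ i, IsProbabilityMeasure (μ i)] (x : ℝ) :
    cdf (Measure.sum fun i => c i • μ i) x = ∑' i, (c i).toReal * cdf (μ i) x := by
  have := isProbabilityMeasure_sum_smul hc μ
  have hc_ne_top : ∀ i, c i ≠ ∞ := ENNReal.ne_top_of_tsum_ne_top (by simp [hc])
  simp only [cdf_eq_real, measureReal_def, Measure.sum_apply _ measurableSet_Iic,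
    Measure.smul_apply, smul_eq_mul]
  rw [ENNReal.tsum_toReal_eq fun i => ENNReal.mul_ne_top (hc_ne_top i) (measure_ne_top _ _)]
  simp only [ENNReal.toReal_mul]

lemma cdfDist_sum_smul_le [Countable ι] {p : ℝ≥0∞} (hp : 1 ≤ p) (μ η : ι → Measure ℝ)
    [∀ i, IsProbabilityMeasure (μ i)] [∀ i, IsProbabilityMeasure (η i)] :
    cdfDist p (Measure.sum fun i => c i • μ i) (Measure.sum fun i => c i • η i)
      ≤ ∑' i, c i * cdfDist p (μ i) (η i) := by
  have hc_ne_top : ∀ i, c i ≠ ∞ := ENNReal.ne_top_of_tsum_ne_top (by simp [hc])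
  have hsummable : Summable fun i => (c i).toReal := ENNReal.summable_toReal (by simp [hc])
  have hbound (ν : ι → Measure ℝ) (x : ℝ) : Summable fun i => (c i).toReal * cdf (ν i) x :=
    hsummable.of_nonneg_of_le (fun i => mul_nonneg ENNReal.toReal_nonneg (cdf_nonneg _ x))
      fun i => mul_le_of_le_one_right ENNReal.toReal_nonneg (cdf_le_one _ x)
  have hdiff : (fun x => cdf (Measure.sum fun i => c i • μ i) x
      - cdf (Measure.sum fun i => c i • η i) x)
      = fun x => ∑' i, (c i).toReal • (cdf (μ i) x - cdf (η i) x) := by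
    ext x
    rw [cdf_sum_smul hc, cdf_sum_smul hc, ← (hbound μ x).tsum_sub (hbound η x)]
    simp only [smul_eq_mul, mul_sub]
  rw [cdfDist, hdiff]
  refine (eLpNorm_tsum_le hp
    (f := fun i => (c i).toReal • fun x => cdf (μ i) x - cdf (η i) x)
    (fun i => (aestronglyMeasurable_cdf_sub_cdf _ _).const_smul _)
    fun x => ?_).trans (le_of_eq (tsum_congr fun i => ?_))
  · simpa only [Pi.smul_apply, smul_eq_mul, mul_sub] using (hbound μ x).sub (hbound η x)
  · rw [eLpNorm_const_smul, Real.enorm_eq_ofReal ENNReal.toReal_nonneg,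
      ENNReal.ofReal_toReal (hc_ne_top i), cdfDist]

lemma lpDist_sum_smul_le [Countable ι] {p : ℝ} (hp : 1 ≤ p) {μ η : ι → Measure ℝ}
    [∀ i, IsProbabilityMeasure (μ i)] [∀ i, IsProbabilityMeasure (η i)] {C M : ℝ}
    (hη : ∀ i, ∀ᵐ x ∂η i, |x| ≤ C) (hM : ∀ i, lpDist p (μ i) (η i) ≤ M) :
    lpDist p (Measure.sum fun i => c i • μ i) (Measure.sum fun i => c i • η i) ≤ M := by
  have := isProbabilityMeasure_sum_smul hc μ
  have := isProbabilityMeasure_sum_smul hc η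
  have hc_ne_top : ∀ i, c i ≠ ∞ := ENNReal.ne_top_of_tsum_ne_top (by simp [hc])
  have hM0 : 0 ≤ M := by
    have hc0 : ∑' i, c i ≠ 0 := by simp [hc]
    obtain ⟨i, -⟩ := not_forall.mp (mt ENNReal.tsum_eq_zero.mpr hc0)
    exact (lpDist_nonneg p _ _).trans (hM i)
  have hsum_η : ∀ᵐ x ∂(Measure.sum fun i => c i • η i), |x| ≤ C :=
    Measure.ae_sum_iff.mpr fun i => Measure.ae_smul_measure (hη i) (c i)
  rw [lpDist_eq_toReal_cdfDist (by linarith)]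
  by_cases hfin : cdfDist (ENNReal.ofReal p) (Measure.sum fun i => c i • μ i)
    (Measure.sum fun i => c i • η i) = ∞
  · rwa [hfin, ENNReal.toReal_top]
  refine ENNReal.toReal_le_of_le_ofReal hM0 ?_
  have hmem : MemLp (fun x => cdf (Measure.sum fun i => c i • μ i) x
      - cdf (Measure.sum fun i => c i • η i) x) (ENNReal.ofReal p) volume :=
    ⟨aestronglyMeasurable_cdf_sub_cdf _ _, lt_top_iff_ne_top.mpr hfin⟩
  have hterm (i : ι) : c i * cdfDist (ENNReal.ofReal p) (μ i) (η i) ≤ c i * ENNReal.ofReal M := by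
    rcases eq_or_ne (c i) 0 with h0 | h0
    · simp [h0]
    have hmemi := memLp_cdf_sub_cdf_of_smul_le h0 (hc_ne_top i)
      (Measure.le_sum (fun i => c i • μ i) i) hsum_η (hη i) hmem
    have hfin_i : cdfDist (ENNReal.ofReal p) (μ i) (η i) ≠ ∞ := hmemi.eLpNorm_ne_top
    gcongr
    rw [← ENNReal.ofReal_toReal hfin_i,
      ← lpDist_eq_toReal_cdfDist (by linarith)]
    exact ENNReal.ofReal_le_ofReal (hM i)
  calc _ ≤ ∑' i, c i * cdfDist (ENNReal.ofReal p) (μ i) (η i) :=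
        cdfDist_sum_smul_le hc (ENNReal.one_le_ofReal.mpr hp) μ η
    _ ≤ ∑' i, c i * ENNReal.ofReal M := ENNReal.tsum_le_tsum hterm
    _ = ENNReal.ofReal M := by rw [ENNReal.tsum_mul_right, hc, one_mul]

end Mixture

instance isProbabilityMeasure_map_mul_add (μ : Measure ℝ) [IsProbabilityMeasure μ] (γ r : ℝ) :
    IsProbabilityMeasure (μ.map fun y => γ * y + r) :=
  Measure.isProbabilityMeasure_map ((measurable_const_mul γ).add_const r).aemeasurable

section Affine

variable {γ : ℝ} (hγ : 0 < γ) (r : ℝ)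
include hγ

lemma map_volume_sub_div :
    Measure.map (fun x => (x - r) / γ) volume = ENNReal.ofReal γ • volume := by
  have : (fun x : ℝ => (x - r) / γ) = (fun y => γ⁻¹ * y) ∘ fun x => x - r := by
    ext x; simp [div_eq_inv_mul]
  rw [this, ← Measure.map_map (measurable_const_mul _) (measurable_sub_const r),
    (measurePreserving_sub_right volume r).map_eq, Real.map_volume_mul_left (inv_ne_zero hγ.ne'),
    inv_inv, abs_of_pos hγ]

lemma eLpNorm_comp_sub_div {E : Type*} [NormedAddCommGroup E] {p : ℝ≥0∞} (hp : p ≠ ∞)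
    {f : ℝ → E} (hf : AEStronglyMeasurable f volume) :
    eLpNorm (fun x => f ((x - r) / γ)) p volume
      = ENNReal.ofReal γ ^ (1 / p).toReal * eLpNorm f p volume := by
  have hmeas : Measurable fun x : ℝ => (x - r) / γ := (measurable_sub_const r).div_const γ
  have hf' : AEStronglyMeasurable f (Measure.map (fun x => (x - r) / γ) volume) := by
    rw [map_volume_sub_div hγ]
    exact hf.smul_measure _
  rw [← Function.comp_def, ← eLpNorm_map_measure hf' hmeas.aemeasurable, map_volume_sub_div hγ,
    eLpNorm_smul_measure_of_ne_top hp, smul_eq_mul]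

variable (μ η : Measure ℝ) [IsProbabilityMeasure μ] [IsProbabilityMeasure η]

lemma cdf_map_mul_add (x : ℝ) :
    cdf (μ.map fun y => γ * y + r) x = cdf μ ((x - r) / γ) := by
  have hmeas : Measurable fun y : ℝ => γ * y + r := (measurable_const_mul γ).add_const r
  rw [cdf_eq_real, cdf_eq_real, measureReal_def, measureReal_def,
    Measure.map_apply hmeas measurableSet_Iic]
  congr 2
  ext y
  simp only [mem_preimage, mem_Iic, le_div_iff₀ hγ]
  constructor <;> intro h <;> linarith

lemma lpDist_map_mul_add {p : ℝ} (hp : 0 < p) :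
    lpDist p (μ.map fun y => γ * y + r) (η.map fun y => γ * y + r)
      = γ ^ (1 / p) * lpDist p μ η := by
  have hcomp : cdfDist (ENNReal.ofReal p) (μ.map fun y => γ * y + r) (η.map fun y => γ * y + r)
      = ENNReal.ofReal γ ^ (1 / p) * cdfDist (ENNReal.ofReal p) μ η := by
    simp only [cdfDist, cdf_map_mul_add hγ]
    rw [eLpNorm_comp_sub_div hγ r ENNReal.ofReal_ne_top (aestronglyMeasurable_cdf_sub_cdf μ η),
      one_div, ENNReal.toReal_inv, ENNReal.toReal_ofReal hp.le, one_div]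
  rw [lpDist_eq_toReal_cdfDist hp, lpDist_eq_toReal_cdfDist hp, hcomp, ENNReal.toReal_mul,
    ← ENNReal.toReal_rpow, ENNReal.toReal_ofReal hγ.le]

omit [IsProbabilityMeasure μ] in
lemma ae_abs_le_map_mul_add {C : ℝ} (hμ : ∀ᵐ x ∂μ, |x| ≤ C) :
    ∀ᵐ x ∂(μ.map fun y => γ * y + r), |x| ≤ γ * C + |r| := by
  have hmeas : Measurable fun y : ℝ => γ * y + r := (measurable_const_mul γ).add_const r
  refine (ae_map_iff hmeas.aemeasurable (measurableSet_le (by fun_prop) (by fun_prop))).mpr ?_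
  filter_upwards [hμ] with x hx
  calc |γ * x + r| ≤ |γ * x| + |r| := abs_add_le _ _
    _ ≤ γ * C + |r| := by rw [abs_mul, abs_of_pos hγ]; gcongr

end Affine

lemma MeasureTheory.Measure.sum_smul_of_tsum_eq_one {α ι : Type*} [MeasurableSpace α]
    {c : ι → ℝ≥0∞} (hc : ∑' i, c i = 1) (μ : Measure α) : Measure.sum (fun i => c i • μ) = μ := by
  ext s hs
  simp [Measure.sum_apply _ hs, ENNReal.tsum_mul_right, hc]

lemma apply_iterate_le_pow_mul {X : Type*} {T : X → X} {s : Set X} {d : X → ℝ} {q : ℝ}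
    (hq : 0 ≤ q) (hT : MapsTo T s s) (hd : ∀ x ∈ s, d (T x) ≤ q * d x) :
    ∀ (k : ℕ) {x : X}, x ∈ s → d (T^[k] x) ≤ q ^ k * d x
  | 0, x, _ => by simp
  | k + 1, x, hx => by
    rw [Function.iterate_succ_apply, pow_succ, mul_assoc]
    exact (apply_iterate_le_pow_mul hq hT hd k (hT hx)).trans
      (mul_le_mul_of_nonneg_left (hd x hx) (pow_nonneg hq k))

lemma eq_zero_of_le_comp_of_tendsto_atTop {m : ℝ → ℝ≥0∞} {γ B t : ℝ} (hγ0 : 0 < γ)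
    (hγ1 : γ < 1) (hm : Tendsto m atTop (nhds 0)) (hstep : ∀ s, m s ≤ m ((s - B) / γ))
    (ht : B / (1 - γ) < t) : m t = 0 := by
  set C := B / (1 - γ)
  -- `C` is the fixed point of `s ↦ (s - B) / γ`, which pushes every `t > C` off to infinity.
  have hC : B = C * (1 - γ) := (div_mul_cancel₀ B (by linarith : (1 : ℝ) - γ ≠ 0)).symm
  have hiter (n : ℕ) : m t ≤ m (C + (t - C) / γ ^ n) := by
    induction n with
    | zero => simp
    | succ n ih =>
      refine ih.trans ((hstep _).trans_eq (congrArg m ?_))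
      rw [hC]
      field_simp
      ring
  have hgrow : Tendsto (fun n : ℕ => C + (t - C) / γ ^ n) atTop atTop := by
    have hpow := tendsto_pow_atTop_atTop_of_one_lt ((one_lt_inv₀ hγ0).mpr hγ1)
    refine tendsto_atTop_add_const_left _ C ?_
    simpa [div_eq_mul_inv, inv_pow] using hpow.const_mul_atTop (sub_pos.mpr ht)
  exact nonpos_iff_eq_zero.mp (ge_of_tendsto' (hm.comp hgrow) hiter)

lemma tendsto_measure_lt_abs_atTop (μ : Measure ℝ) [IsFiniteMeasure μ] :
    Tendsto (fun t => μ {x | t < |x|}) atTop (nhds 0) := by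
  have hempty : ⋂ t : ℝ, {x : ℝ | t < |x|} = ∅ :=
    eq_empty_of_forall_notMem fun x hx => lt_irrefl |x| (mem_iInter.mp hx |x|)
  have := tendsto_measure_iInter_atTop (μ := μ) (s := fun t : ℝ => {x | t < |x|})
    (fun t => (measurableSet_lt measurable_const measurable_abs).nullMeasurableSet)
    (fun a b hab x hx => lt_of_le_of_lt hab hx) ⟨0, measure_ne_top _ _⟩
  rwa [hempty, measure_empty] at this

lemma tendsto_iSup_measure_lt_abs_atTop {ι : Type*} [Fintype ι] (μ : ι → Measure ℝ)
    [∀ i, IsFiniteMeasure (μ i)] : Tendsto (fun t => ⨆ i, μ i {x | t < |x|}) atTop (nhds 0) := by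
  simp_rw [← Finset.sup_univ_eq_iSup]
  have := Tendsto.finset_sup_nhds_apply (s := Finset.univ) (g := fun _ => (⊥ : ℝ≥0∞))
    fun i _ => tendsto_measure_lt_abs_atTop (μ i)
  rwa [Finset.sup_bot] at this

lemma supDist_nonneg {S A : Type*} (p : ℝ) (ν η : S × A → Measure ℝ) : 0 ≤ supDist p ν η :=
  Real.iSup_nonneg fun _ => lpDist_nonneg _ _ _

lemma lpDist_le_supDist {S A : Type*} [Finite S] [Finite A] (p : ℝ) (ν η : S × A → Measure ℝ)
    (sa : S × A) : lpDist p (ν sa) (η sa) ≤ supDist p ν η :=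
  le_ciSup (f := fun sa => lpDist p (ν sa) (η sa)) (Finite.bddAbove_range _) sa

section MDP

variable {S A : Type*} [Fintype S] [Fintype A] {P : S → A → S → ℝ} {π : S → A → ℝ}
  {Rw : S → A → S → ℝ} {γ : ℝ}

lemma oneStepOp_eq_sum_smul (ν : S × A → Measure ℝ) (sa : S × A) :
    oneStepOp P π Rw γ ν sa = Measure.sum fun j : S × A =>
      ENNReal.ofReal (P sa.1 sa.2 j.1 * π j.1 j.2) •
        (ν j).map fun x => γ * x + Rw sa.1 sa.2 j.1 := by
  rw [Measure.sum_fintype, oneStepOp, Fintype.sum_prod_type]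

variable (hP : ∀ s a, (∀ s', 0 ≤ P s a s') ∧ ∑ s', P s a s' = 1)
  (hπ : ∀ s, (∀ a, 0 ≤ π s a) ∧ ∑ a, π s a = 1)
include hP hπ

lemma tsum_transition_weights (sa : S × A) :
    ∑' j : S × A, ENNReal.ofReal (P sa.1 sa.2 j.1 * π j.1 j.2) = 1 := by
  rw [tsum_fintype, ← ENNReal.ofReal_sum_of_nonneg
    fun j _ => mul_nonneg ((hP _ _).1 _) ((hπ _).1 _), Fintype.sum_prod_type]
  simp_rw [← Finset.mul_sum, (hπ _).2, mul_one, (hP _ _).2, ENNReal.ofReal_one]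

lemma mapsTo_oneStepOp :
    MapsTo (oneStepOp P π Rw γ) {ν | ∀ j, IsProbabilityMeasure (ν j)}
      {ν | ∀ j, IsProbabilityMeasure (ν j)} := by
  intro ν (hν : ∀ j, IsProbabilityMeasure (ν j)) sa
  rw [oneStepOp_eq_sum_smul]
  exact isProbabilityMeasure_sum_smul (tsum_transition_weights hP hπ sa) _

lemma supDist_oneStepOp_le {p : ℝ} (hp : 1 ≤ p) (hγ : 0 < γ) {ν η : S × A → Measure ℝ}
    (hν : ∀ j, IsProbabilityMeasure (ν j)) (hη : ∀ j, IsProbabilityMeasure (η j)) {C : ℝ}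
    (hηC : ∀ j, ∀ᵐ x ∂η j, |x| ≤ C) :
    supDist p (oneStepOp P π Rw γ ν) (oneStepOp P π Rw γ η) ≤ γ ^ (1 / p) * supDist p ν η := by
  obtain ⟨B, hB⟩ := Finite.exists_le fun x : S × A × S => |Rw x.1 x.2.1 x.2.2|
  refine Real.iSup_le (fun sa => ?_) (mul_nonneg (by positivity) (supDist_nonneg p ν η))
  rw [oneStepOp_eq_sum_smul, oneStepOp_eq_sum_smul]
  refine lpDist_sum_smul_le (tsum_transition_weights hP hπ sa) hp (C := γ * C + B)
    (fun j => ?_) fun j => ?_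
  · filter_upwards [ae_abs_le_map_mul_add hγ _ _ (hηC j)] with x hx
    exact hx.trans (by gcongr; exact hB (sa.1, sa.2, j.1))
  · rw [lpDist_map_mul_add hγ _ _ _ (by linarith)]
    exact mul_le_mul_of_nonneg_left (lpDist_le_supDist p ν η j) (by positivity)

lemma supDist_oneStepOp_iterate_le {p : ℝ} (hp : 1 ≤ p) (hγ : 0 < γ) {ν νR : S × A → Measure ℝ}
    (hν : ∀ j, IsProbabilityMeasure (ν j)) (hνR : ∀ j, IsProbabilityMeasure (νR j))
    (hfix : oneStepOp P π Rw γ νR = νR) {C : ℝ} (hC : ∀ j, ∀ᵐ x ∂νR j, |x| ≤ C) (k : ℕ) :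
    supDist p ((oneStepOp P π Rw γ)^[k] ν) νR ≤ (γ ^ (1 / p)) ^ k * supDist p ν νR :=
  apply_iterate_le_pow_mul (d := fun ν => supDist p ν νR) (Real.rpow_nonneg hγ.le _)
    (mapsTo_oneStepOp hP hπ)
    (fun _ h => by
      have := supDist_oneStepOp_le (Rw := Rw) hP hπ hp hγ h hνR hC
      rwa [hfix] at this) k hν

lemma measure_lt_abs_le_iSup_of_oneStepOp_eq_self {νR : S × A → Measure ℝ}
    (hfix : oneStepOp P π Rw γ νR = νR) (hγ : 0 < γ) {B : ℝ} (hB : ∀ s a s', |Rw s a s'| ≤ B)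
    (t : ℝ) (sa : S × A) : νR sa {x | t < |x|} ≤ ⨆ j, νR j {x | (t - B) / γ < |x|} := by
  have hpre (j : S × A) : (fun x => γ * x + Rw sa.1 sa.2 j.1) ⁻¹' {x | t < |x|}
      ⊆ {x | (t - B) / γ < |x|} := fun y (hy : t < |γ * y + Rw sa.1 sa.2 j.1|) => by
    have htri := abs_add_le (γ * y) (Rw sa.1 sa.2 j.1)
    rw [abs_mul, abs_of_pos hγ] at htri
    show (t - B) / γ < |y|
    rw [div_lt_iff₀ hγ]
    linarith [hB sa.1 sa.2 j.1]
  conv_lhs => rw [← hfix]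
  rw [oneStepOp_eq_sum_smul, Measure.sum_apply _ (measurableSet_lt measurable_const measurable_abs)]
  have hterm (j : S × A) : (ENNReal.ofReal (P sa.1 sa.2 j.1 * π j.1 j.2)
      • (νR j).map fun x => γ * x + Rw sa.1 sa.2 j.1) {x | t < |x|}
      ≤ ENNReal.ofReal (P sa.1 sa.2 j.1 * π j.1 j.2) * ⨆ j, νR j {x | (t - B) / γ < |x|} := by
    rw [Measure.smul_apply, smul_eq_mul, Measure.map_apply ((measurable_const_mul γ).add_const _)
      (measurableSet_lt measurable_const measurable_abs)]
    gcongr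
    exact (measure_mono (hpre j)).trans (le_iSup (fun j => νR j _) j)
  refine (ENNReal.tsum_le_tsum hterm).trans_eq ?_
  rw [ENNReal.tsum_mul_right, tsum_transition_weights hP hπ sa, one_mul]

lemma exists_ae_abs_le_of_oneStepOp_eq_self (hγ0 : 0 < γ) (hγ1 : γ < 1)
    {νR : S × A → Measure ℝ} (hνR : ∀ sa, IsProbabilityMeasure (νR sa))
    (hfix : oneStepOp P π Rw γ νR = νR) : ∃ C, ∀ sa, ∀ᵐ x ∂νR sa, |x| ≤ C := by
  obtain ⟨B, hB⟩ := Finite.exists_le fun x : S × A × S => |Rw x.1 x.2.1 x.2.2|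
  have htail := eq_zero_of_le_comp_of_tendsto_atTop hγ0 hγ1
    (tendsto_iSup_measure_lt_abs_atTop νR) (fun t => iSup_le fun sa =>
      measure_lt_abs_le_iSup_of_oneStepOp_eq_self hP hπ hfix hγ0 (fun s a s' => hB (s, a, s')) t sa)
    (lt_add_one (B / (1 - γ)))
  refine ⟨B / (1 - γ) + 1, fun sa => ae_iff.mpr ?_⟩
  simp only [not_le]
  exact nonpos_iff_eq_zero.mp ((le_iSup (fun j => νR j _) sa).trans_eq htail)

end MDP

lemma tsum_ofReal_one_sub_mul_pow {lam : ℝ} (hlam0 : 0 ≤ lam) (hlam1 : lam < 1) :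
    ∑' i : ℕ, ENNReal.ofReal ((1 - lam) * lam ^ i) = 1 := by
  rw [← ENNReal.ofReal_tsum_of_nonneg (fun i => by have := pow_nonneg hlam0 i; nlinarith)
      ((summable_geometric_of_lt_one hlam0 hlam1).mul_left _),
    tsum_mul_left, tsum_geometric_of_lt_one hlam0 hlam1,
    mul_inv_cancel₀ (by linarith : (1 : ℝ) - lam ≠ 0), ENNReal.ofReal_one]

section TDLambda

variable {S A : Type*} [Fintype S] [Fintype A] {P : S → A → S → ℝ} {π : S → A → ℝ}
  {Rw : S → A → S → ℝ} {γ lam : ℝ}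

lemma tdLambdaOp_eq_self (hlam0 : 0 ≤ lam) (hlam1 : lam < 1) {νR : S × A → Measure ℝ}
    (hfix : oneStepOp P π Rw γ νR = νR) : tdLambdaOp P π Rw γ lam νR = νR := by
  funext sa
  simp only [tdLambdaOp, Function.iterate_fixed hfix]
  exact Measure.sum_smul_of_tsum_eq_one (tsum_ofReal_one_sub_mul_pow hlam0 hlam1) _

variable (hP : ∀ s a, (∀ s', 0 ≤ P s a s') ∧ ∑ s', P s a s' = 1)
  (hπ : ∀ s, (∀ a, 0 ≤ π s a) ∧ ∑ a, π s a = 1)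
include hP hπ

lemma mapsTo_tdLambdaOp (hlam0 : 0 ≤ lam) (hlam1 : lam < 1) :
    MapsTo (tdLambdaOp P π Rw γ lam) {ν | ∀ j, IsProbabilityMeasure (ν j)}
      {ν | ∀ j, IsProbabilityMeasure (ν j)} := fun _ hν sa =>
  have (i : ℕ) := (mapsTo_oneStepOp (Rw := Rw) (γ := γ) hP hπ).iterate (i + 1) hν sa
  isProbabilityMeasure_sum_smul (tsum_ofReal_one_sub_mul_pow hlam0 hlam1) _

lemma supDist_tdLambdaOp_le {p : ℝ} (hp : 1 ≤ p) (hγ0 : 0 < γ) (hγ1 : γ < 1)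
    (hlam0 : 0 ≤ lam) (hlam1 : lam < 1) {ν νR : S × A → Measure ℝ}
    (hν : ∀ j, IsProbabilityMeasure (ν j)) (hνR : ∀ j, IsProbabilityMeasure (νR j))
    (hfix : oneStepOp P π Rw γ νR = νR) {C : ℝ} (hC : ∀ j, ∀ᵐ x ∂νR j, |x| ≤ C) :
    supDist p (tdLambdaOp P π Rw γ lam ν) νR ≤ γ ^ (1 / p) * supDist p ν νR := by
  have hq0 : 0 ≤ γ ^ (1 / p) := Real.rpow_nonneg hγ0.le _
  have hq1 : γ ^ (1 / p) ≤ 1 := Real.rpow_le_one hγ0.le hγ1.le (by positivity)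
  refine Real.iSup_le (fun sa => ?_) (mul_nonneg hq0 (supDist_nonneg p ν νR))
  have (i : ℕ) := (mapsTo_oneStepOp (Rw := Rw) (γ := γ) hP hπ).iterate (i + 1) hν sa
  rw [← Measure.sum_smul_of_tsum_eq_one (tsum_ofReal_one_sub_mul_pow hlam0 hlam1) (νR sa)]
  exact lpDist_sum_smul_le (tsum_ofReal_one_sub_mul_pow hlam0 hlam1) hp (fun _ => hC sa) fun i =>
    (lpDist_le_supDist p _ νR sa).trans <|
      (supDist_oneStepOp_iterate_le hP hπ hp hγ0 hν hνR hfix hC (i + 1)).trans <|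
      mul_le_mul_of_nonneg_right (pow_le_of_le_one hq0 hq1 i.succ_ne_zero) (supDist_nonneg _ _ _)

end TDLambda

theorem stmt_10_general {S A : Type*} [Fintype S] [Fintype A]
    (P : S → A → S → ℝ) (π : S → A → ℝ) (Rw : S → A → S → ℝ)
    (hP : ∀ s a, (∀ s', 0 ≤ P s a s') ∧ ∑ s', P s a s' = 1)
    (hπ : ∀ s, (∀ a, 0 ≤ π s a) ∧ ∑ a, π s a = 1)
    (γ lam p : ℝ) (hγ0 : 0 < γ) (hγ1 : γ < 1) (hlam0 : 0 ≤ lam) (hlam1 : lam < 1)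
    (hp : 1 ≤ p)
    (νR : S × A → Measure ℝ) (hνR : ∀ sa, IsProbabilityMeasure (νR sa))
    (hBellman : oneStepOp P π Rw γ νR = νR) :
    tdLambdaOp P π Rw γ lam νR = νR ∧
      ∀ ν₀ : S × A → Measure ℝ, (∀ sa, IsProbabilityMeasure (ν₀ sa)) →
        Tendsto (fun k => supDist p ((tdLambdaOp P π Rw γ lam)^[k] ν₀) νR)
          atTop (nhds 0) := by
  obtain ⟨C, hC⟩ := exists_ae_abs_le_of_oneStepOp_eq_self hP hπ hγ0 hγ1 hνR hBellman
  refine ⟨tdLambdaOp_eq_self hlam0 hlam1 hBellman, fun ν₀ hν₀ => ?_⟩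
  have hq0 : 0 ≤ γ ^ (1 / p) := Real.rpow_nonneg hγ0.le _
  have hq1 : γ ^ (1 / p) < 1 := Real.rpow_lt_one hγ0.le hγ1 (one_div_pos.mpr (by linarith))
  have hcontract (k : ℕ) : supDist p ((tdLambdaOp P π Rw γ lam)^[k] ν₀) νR
      ≤ (γ ^ (1 / p)) ^ k * supDist p ν₀ νR :=
    apply_iterate_le_pow_mul (d := fun ν => supDist p ν νR) hq0
      (mapsTo_tdLambdaOp hP hπ hlam0 hlam1)
      (fun _ h => supDist_tdLambdaOp_le hP hπ hp hγ0 hγ1 hlam0 hlam1 h hνR hBellman hC) k hν₀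
  have hlim : Tendsto (fun k : ℕ => (γ ^ (1 / p)) ^ k * supDist p ν₀ νR) atTop (nhds 0) := by
    simpa using (tendsto_pow_atTop_nhds_zero_of_lt_one hq0 hq1).mul_const (supDist p ν₀ νR)
  exact tendsto_of_tendsto_of_tendsto_of_le_of_le tendsto_const_nhds hlim
    (fun k => supDist_nonneg _ _ _) hcontract

/-- The return distribution `ν_R^π`, characterized by the distributional Bellman equation
`ν_R^π = T₁ ν_R^π`, is a fixed point of the distributional TD(λ) operator:
`T_λ^{μ,π} ν_R^π = ν_R^π`. Combined with the `γ^{1/p}`-contraction property, the iteration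
`ν_{k+1} = T_λ^{μ,π} ν_k` converges to `ν_R^π` from any initial `ν₀`. -/
theorem stmt_10 {S A : Type*} [Fintype S] [Fintype A] [Nonempty S] [Nonempty A]
    (P : S → A → S → ℝ) (π : S → A → ℝ) (Rw : S → A → S → ℝ)
    (hP : ∀ s a, (∀ s', 0 ≤ P s a s') ∧ ∑ s', P s a s' = 1)
    (hπ : ∀ s, (∀ a, 0 ≤ π s a) ∧ ∑ a, π s a = 1)
    (γ lam p : ℝ) (hγ0 : 0 < γ) (hγ1 : γ < 1) (hlam0 : 0 ≤ lam) (hlam1 : lam < 1)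
    (hp : 1 ≤ p)
    (νR : S × A → Measure ℝ) (hνR : ∀ sa, IsProbabilityMeasure (νR sa))
    (hBellman : oneStepOp P π Rw γ νR = νR) :
    tdLambdaOp P π Rw γ lam νR = νR ∧
      ∀ ν₀ : S × A → Measure ℝ, (∀ sa, IsProbabilityMeasure (ν₀ sa)) →
        Tendsto (fun k => supDist p ((tdLambdaOp P π Rw γ lam)^[k] ν₀) νR)
          atTop (nhds 0) :=
  stmt_10_general P π Rw hP hπ γ lam p hγ0 hγ1 hlam0 hlam1 hp νR hνR hBellman
end

section
/- Let π, π', μ be policies in a finite MDP with discount γ, entropy-regularized objective J(π') = (1/(1-γ)) E_{s∼d^{π'}, a∼π'}[δ^{π'}(s) + β H^{π'}(s)] + E_{ρ}[V^π], and surrogate J^{μ,π}(π') = ⟨ρ, V^π⟩ + (1/(1-γ))(⟨d^μ, δ^{π'}⟩ + β⟨d^π, H^{π'}⟩). Assume ‖d^π - d^{π'}‖_1 ≤ (γ/(1-γ))√(2 D_KL^max(π‖π')), sup_s|δ^{π'}(s) - δ^π(s)| ≤ ε_R √(2 D_KL^max(μ‖π')), δ^π = 0, and sup_s |H^{π'}(s)|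 ≤ ε_H. Then |J(π') - J^{μ,π}(π')| ≤ (√2 γ/(1-γ)²) √(D_KL^max(π‖π')) (β ε_H + ε_R √(2 D_KL^max(μ‖π'))), with equality when π' = π. -/
/-- Bound between the entropy-regularized objective
`J(π') = ⟨ρ, V^π⟩ + (1/(1-γ))⟨d^{π'}, δ^{π'} + β H^{π'}⟩` and its surrogate
`J^{μ,π}(π') = ⟨ρ, V^π⟩ + (1/(1-γ))(⟨d^μ, δ^{π'}⟩ + β⟨d^π, H^{π'}⟩)`:
under the state-distribution bounds, the advantage bound, `δ^π = 0`, and the entropy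
bound, `|J(π') - J^{μ,π}(π')| ≤ (√2 γ/(1-γ)²)√(D_KL^max(π‖π'))(β ε_H + ε_R √(2 D_KL^max(μ‖π')))`,
with equality when `π' = π`. -/
theorem stmt_12 {S : Type*} [Fintype S]
    (γ β εR εH Dππ' Dμπ' : ℝ)
    (hγ0 : 0 < γ) (hγ1 : γ < 1) (hβ : 0 ≤ β) (hεR : 0 ≤ εR) (hεH : 0 ≤ εH)
    (hDππ' : 0 ≤ Dππ') (hDμπ' : 0 ≤ Dμπ')
    (ρ dπ dπ' dμ Vπ δπ δπ' Hπ' : S → ℝ)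
    (hd1 : ∑ s, |dπ s - dπ' s| ≤ (γ / (1 - γ)) * Real.sqrt (2 * Dππ'))
    (hd2 : ∑ s, |dπ' s - dμ s| ≤ (γ / (1 - γ)) * Real.sqrt (2 * Dππ'))
    (hδ : ∀ s, |δπ' s - δπ s| ≤ εR * Real.sqrt (2 * Dμπ'))
    (hδπ : δπ = 0)
    (hH : ∀ s, |Hπ' s| ≤ εH) :
    |((∑ s, ρ s * Vπ s) + (1 / (1 - γ)) * ∑ s, dπ' s * (δπ' s + β * Hπ' s)) -
        ((∑ s, ρ s * Vπ s) +
          (1 / (1 - γ)) * ((∑ s, dμ s * δπ' s) + β * ∑ s, dπ s * Hπ' s))| ≤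
      (Real.sqrt 2 * γ / (1 - γ) ^ 2) * Real.sqrt Dππ' *
        (β * εH + εR * Real.sqrt (2 * Dμπ')) ∧
    (dπ' = dπ → δπ' = δπ → Dππ' = 0 →
      |((∑ s, ρ s * Vπ s) + (1 / (1 - γ)) * ∑ s, dπ' s * (δπ' s + β * Hπ' s)) -
          ((∑ s, ρ s * Vπ s) +
            (1 / (1 - γ)) * ((∑ s, dμ s * δπ' s) + β * ∑ s, dπ s * Hπ' s))| =
        (Real.sqrt 2 * γ / (1 - γ) ^ 2) * Real.sqrt Dππ' *
          (β * εH + εR * Real.sqrt (2 * Dμπ'))) := by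

  have h1γ : 0 < 1 - γ := by linarith
  subst hδπ
  simp only [Pi.zero_apply, sub_zero] at hδ
  set C := εR * Real.sqrt (2 * Dμπ') with hC
  have hC0 : 0 ≤ C := mul_nonneg hεR (Real.sqrt_nonneg _)
  set K := (γ / (1 - γ)) * Real.sqrt (2 * Dππ') with hK
  have hrw : ((∑ s, ρ s * Vπ s) + (1 / (1 - γ)) * ∑ s, dπ' s * (δπ' s + β * Hπ' s)) -
      ((∑ s, ρ s * Vπ s) +
        (1 / (1 - γ)) * ((∑ s, dμ s * δπ' s) + β * ∑ s, dπ s * Hπ' s)) =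
      (1 / (1 - γ)) * ((∑ s, (dπ' s - dμ s) * δπ' s) + β * ∑ s, (dπ' s - dπ s) * Hπ' s) := by
    have e1 : ∑ s, dπ' s * (δπ' s + β * Hπ' s)
        = (∑ s, dπ' s * δπ' s) + β * ∑ s, dπ' s * Hπ' s := by
      simp [mul_add, Finset.sum_add_distrib, Finset.mul_sum, mul_left_comm]
    have e2 : ∑ s, (dπ' s - dμ s) * δπ' s
        = (∑ s, dπ' s * δπ' s) - ∑ s, dμ s * δπ' s := by
      simp [sub_mul, Finset.sum_sub_distrib]
    have e3 : ∑ s, (dπ' s - dπ s) * Hπ' s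
        = (∑ s, dπ' s * Hπ' s) - ∑ s, dπ s * Hπ' s := by
      simp [sub_mul, Finset.sum_sub_distrib]
    rw [e1, e2, e3]; ring
  have hX : |∑ s, (dπ' s - dμ s) * δπ' s| ≤ K * C := by
    calc |∑ s, (dπ' s - dμ s) * δπ' s| ≤ ∑ s, |(dπ' s - dμ s) * δπ' s| :=
          Finset.abs_sum_le_sum_abs _ _
      _ ≤ ∑ s, |dπ' s - dμ s| * C := by
          apply Finset.sum_le_sum
          intro s _
          rw [abs_mul]
          exact mul_le_mul_of_nonneg_left (hδ s) (abs_nonneg _)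
      _ = (∑ s, |dπ' s - dμ s|) * C := by rw [Finset.sum_mul]
      _ ≤ K * C := mul_le_mul_of_nonneg_right hd2 hC0
  have hY : |∑ s, (dπ' s - dπ s) * Hπ' s| ≤ K * εH := by
    calc |∑ s, (dπ' s - dπ s) * Hπ' s| ≤ ∑ s, |(dπ' s - dπ s) * Hπ' s| :=
          Finset.abs_sum_le_sum_abs _ _
      _ ≤ ∑ s, |dπ' s - dπ s| * εH := by
          apply Finset.sum_le_sum
          intro s _
          rw [abs_mul]
          exact mul_le_mul_of_nonneg_left (hH s) (abs_nonneg _)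
      _ = (∑ s, |dπ s - dπ' s|) * εH := by
          rw [Finset.sum_mul]
          apply Finset.sum_congr rfl
          intro s _
          rw [abs_sub_comm]
      _ ≤ K * εH := mul_le_mul_of_nonneg_right hd1 hεH
  have hsq : Real.sqrt (2 * Dππ') = Real.sqrt 2 * Real.sqrt Dππ' :=
    Real.sqrt_mul (by norm_num) _
  have hRHS : (Real.sqrt 2 * γ / (1 - γ) ^ 2) * Real.sqrt Dππ' * (β * εH + C) =
      (1 / (1 - γ)) * (K * C + β * (K * εH)) := by
    rw [hK, hsq]
    field_simp
    ring
  constructor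
  · rw [hrw, hRHS, abs_mul, abs_of_pos (by positivity : (0:ℝ) < 1 / (1 - γ))]
    apply mul_le_mul_of_nonneg_left _ (by positivity)
    calc |(∑ s, (dπ' s - dμ s) * δπ' s) + β * ∑ s, (dπ' s - dπ s) * Hπ' s| ≤
        |∑ s, (dπ' s - dμ s) * δπ' s| + |β * ∑ s, (dπ' s - dπ s) * Hπ' s| := abs_add_le _ _
      _ ≤ K * C + β * (K * εH) := by
          apply add_le_add hX
          rw [abs_mul, abs_of_nonneg hβ]
          exact mul_le_mul_of_nonneg_left hY hβ
  · intro h1 h2 h3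
    rw [hrw, h1, h2, h3]
    simp
end

section
/- In the worst-case time analysis of the gradient-integration NPG method in a tabular MDP: if β(1-γ)(ζ - 2βC_max/(1-γ)²) > 0 and for all t ≤ T the per-step inequality β(1-γ)(ζ - 2βC_max/(1-γ)²) Σ_k λ_k^t / W_t ≤ E_{s∼d^*}[D_KL(π_*‖π_t)] - E_{s∼d^*}[D_KL(π_*‖π_{t+1})] + (telescoping terms) holds, and W_t ≤ Σ_k λ_k^t · 2|S||A|C_max/(1-γ), then the number of steps T before all constraints are satisfied is at most T_max = 2|S||A| C_max D_KL / (β(1-γ)² ζ - 2β² C_max), where D_KL = E_{s∼d^*}[D_KL(π_*‖π_0)]. -/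
/-- Worst-case time bound for the gradient-integration NPG method in a tabular MDP: if
`β(1-γ)(ζ - 2βC_max/(1-γ)²) > 0`, the telescoped per-step inequalities give
`β(1-γ)(ζ - 2βC_max/(1-γ)²) Σ_{t=0}^T Σ_k λ_k^t / W_t ≤ D_KL`, and
`W_t ≤ Σ_k λ_k^t · 2|S||A|C_max/(1-γ)` for all `t ≤ T`, then the number of steps `T`
before all constraints are satisfied is at most
`T_max = 2|S||A| C_max D_KL / (β(1-γ)² ζ - 2β² C_max)`. -/
theorem stmt_15 {K : ℕ} (nS nA : ℕ) (hnS : 0 < nS) (hnA : 0 < nA)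
    (Cmax γ ζ β DKL : ℝ) (hC : 0 < Cmax) (hγ0 : 0 < γ) (hγ1 : γ < 1)
    (hζ : 0 < ζ) (hβ : 0 < β)
    (T : ℕ) (lam : ℕ → Fin K → ℝ) (W : ℕ → ℝ)
    (hlam : ∀ t k, 0 ≤ lam t k)
    (hlampos : ∀ t ≤ T, 0 < ∑ k, lam t k)
    (hWpos : ∀ t ≤ T, 0 < W t)
    (hc : 0 < β * (1 - γ) * (ζ - 2 * β * Cmax / (1 - γ) ^ 2))
    (hsum : β * (1 - γ) * (ζ - 2 * β * Cmax / (1 - γ) ^ 2) *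
        ∑ t ∈ Finset.range (T + 1), (∑ k, lam t k) / W t ≤ DKL)
    (hW : ∀ t ≤ T, W t ≤ (∑ k, lam t k) * 2 * nS * nA * Cmax / (1 - γ)) :
    (T : ℝ) ≤ 2 * nS * nA * Cmax * DKL / (β * (1 - γ) ^ 2 * ζ - 2 * β ^ 2 * Cmax) := by
  set c : ℝ := β * (1 - γ) * (ζ - 2 * β * Cmax / (1 - γ) ^ 2) with hcdef
  have hγd : 0 < 1 - γ := by linarith
  have hnS' : (0:ℝ) < nS := by exact_mod_cast hnS
  have hnA' : (0:ℝ) < nA := by exact_mod_cast hnA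
  have hM : (0:ℝ) < 2 * nS * nA * Cmax := by positivity
  -- per-term lower bound
  have hterm : ∀ t ∈ Finset.range (T + 1),
      (1 - γ) / (2 * nS * nA * Cmax) ≤ (∑ k, lam t k) / W t := by
    intro t ht
    have ht' : t ≤ T := Nat.lt_succ_iff.mp (Finset.mem_range.mp ht)
    have hL := hlampos t ht'
    have hWp := hWpos t ht'
    have hWle := hW t ht'
    rw [le_div_iff₀ hγd] at hWle
    rw [div_le_div_iff₀ hM hWp]
    nlinarith
  have hsum' : (T + 1 : ℝ) * ((1 - γ) / (2 * nS * nA * Cmax)) ≤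
      ∑ t ∈ Finset.range (T + 1), (∑ k, lam t k) / W t := by
    calc (T + 1 : ℝ) * ((1 - γ) / (2 * nS * nA * Cmax))
        = ∑ _t ∈ Finset.range (T + 1), (1 - γ) / (2 * nS * nA * Cmax) := by
          rw [Finset.sum_const, Finset.card_range]; push_cast; ring
      _ ≤ _ := Finset.sum_le_sum hterm
  have hkey : c * ((T + 1 : ℝ) * ((1 - γ) / (2 * nS * nA * Cmax))) ≤ DKL :=
    le_trans (mul_le_mul_of_nonneg_left hsum' hc.le) hsum
  have hD : β * (1 - γ) ^ 2 * ζ - 2 * β ^ 2 * Cmax = c * (1 - γ) := by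
    rw [hcdef]; field_simp
  rw [hD, le_div_iff₀ (by positivity : (0:ℝ) < c * (1 - γ))]
  have h2 : c * ((T + 1 : ℝ) * (1 - γ)) ≤ DKL * (2 * nS * nA * Cmax) := by
    rw [← div_le_iff₀ hM]
    calc c * ((T + 1 : ℝ) * (1 - γ)) / (2 * nS * nA * Cmax)
        = c * ((T + 1 : ℝ) * ((1 - γ) / (2 * nS * nA * Cmax))) := by ring
      _ ≤ DKL := hkey
  nlinarith [mul_pos hc hγd]
end
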